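/- Let G(λ) = C(λE - A)⁻¹B + D be the transfer function with E invertible, and ε > 0 with ε‖D‖₂ < 1. Then the ε-spectral value set σ_ε(A,B,C,D,E) := ⋃{ spec(M(Δ),E) : Δ ∈ ℂ^{m×p}, ‖Δ‖₂ ≤ ε } equals spec(A,E) ∪ { λ ∈ ℂ \ spec(A,E) : ‖G(λ)‖₂ ≥ ε⁻¹ }. -/

import Mathlib

open Matrix Filter Set

noncomputable def specNorm {p m : ℕ} (A : Matrix (Fin p) (Fin m) ℂ) : ℝ :=
  ‖(Matrix.toEuclideanLin A).toContinuousLinearMap‖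

noncomputable def pertSys {n m p : ℕ} (A : Matrix (Fin n) (Fin n) ℂ) (B : Matrix (Fin n) (Fin m) ℂ)
    (C : Matrix (Fin p) (Fin n) ℂ) (D : Matrix (Fin p) (Fin m) ℂ)
    (Δ : Matrix (Fin m) (Fin p) ℂ) : Matrix (Fin n) (Fin n) ℂ :=
  A + B * Δ * (1 - D * Δ)⁻¹ * C

noncomputable def svSet {n m p : ℕ} (ε : ℝ) (A : Matrix (Fin n) (Fin n) ℂ)
    (B : Matrix (Fin n) (Fin m) ℂ) (C : Matrix (Fin p) (Fin n) ℂ)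
    (D : Matrix (Fin p) (Fin m) ℂ) (E : Matrix (Fin n) (Fin n) ℂ) : Set ℂ :=
  {z | ∃ Δ : Matrix (Fin m) (Fin p) ℂ, specNorm Δ ≤ ε ∧ (z • E - pertSys A B C D Δ).det = 0}

noncomputable def transferFn {n m p : ℕ} (A : Matrix (Fin n) (Fin n) ℂ)
    (B : Matrix (Fin n) (Fin m) ℂ) (C : Matrix (Fin p) (Fin n) ℂ)
    (D : Matrix (Fin p) (Fin m) ℂ) (E : Matrix (Fin n) (Fin n) ℂ) (z : ℂ) :
    Matrix (Fin p) (Fin m) ℂ :=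
  C * (z • E - A)⁻¹ * B + D

/-!
Off the spectrum of `(A, E)`, the determinant identity
`det (zE - M(Δ)) · det (1 - ΔD) = det (zE - A) · det (1 - Δ G(z))` (a Schur complement computation)
turns `z ∈ spec (M(Δ), E)` into `1 ∈ spec (Δ G(z))`, and `ε ‖D‖ < 1` keeps `1 - DΔ` invertible for
`‖Δ‖ ≤ ε`. If `1 - Δ G(z)` is singular then `1 ≤ ‖Δ G(z)‖ ≤ ε ‖G(z)‖`. Conversely
`Δ = ‖G‖⁻² Gᴴ` has norm `‖G‖⁻¹`, and `1 - Δ G` is singular because `‖GᴴG‖ = ‖G‖²` lies in the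
spectrum of the positive matrix `GᴴG`.
-/

open scoped Matrix.Norms.L2Operator MatrixOrder ComplexOrder

namespace Matrix

variable {l m n : Type*} [Fintype l] [Fintype m] [Fintype n]

section Determinant

variable [DecidableEq l] [DecidableEq m] [DecidableEq n] {α : Type*} [CommRing α]

theorem mul_inv_one_sub_mul_comm (Δ : Matrix m n α) (D : Matrix n m α)
    [Invertible (1 - D * Δ)] [Invertible (1 - Δ * D)] :
    Δ * (1 - D * Δ)⁻¹ = (1 - Δ * D)⁻¹ * Δ := by
  rw [eq_comm, inv_mul_eq_iff_eq_mul_of_invertible, ← Matrix.mul_assoc, eq_comm,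
    mul_inv_eq_iff_eq_mul_of_invertible]
  simp only [Matrix.mul_sub, Matrix.sub_mul, Matrix.mul_one, Matrix.one_mul, Matrix.mul_assoc]

theorem det_sub_mul_inv_mul_mul_det_one_sub (M : Matrix l l α) (B : Matrix l m α)
    (C : Matrix n l α) (D : Matrix n m α) (Δ : Matrix m n α)
    (hM : IsUnit M.det) (hDΔ : IsUnit (1 - D * Δ).det) :
    (M - B * Δ * (1 - D * Δ)⁻¹ * C).det * (1 - Δ * D).det =
      M.det * (1 - Δ * (C * M⁻¹ * B + D)).det := by
  have hΔD : IsUnit (1 - Δ * D).det := det_one_sub_mul_comm D Δ ▸ hDΔ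
  have : Invertible M := M.invertibleOfIsUnitDet hM
  have : Invertible (1 - D * Δ) := (1 - D * Δ).invertibleOfIsUnitDet hDΔ
  have : Invertible (1 - Δ * D) := (1 - Δ * D).invertibleOfIsUnitDet hΔD
  have h₁₁ := det_fromBlocks₁₁ M B (Δ * C) (1 - Δ * D)
  have h₂₂ := det_fromBlocks₂₂ M B (Δ * C) (1 - Δ * D)
  rw [invOf_eq_nonsing_inv] at h₁₁ h₂₂
  rw [mul_comm, Matrix.mul_assoc B, mul_inv_one_sub_mul_comm]
  simp only [Matrix.mul_assoc] at h₂₂ ⊢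
  rw [← h₂₂, h₁₁]
  congr 2
  simp only [Matrix.mul_add, Matrix.mul_assoc]
  abel

end Determinant

theorem det_one_sub_ne_zero_of_l2_opNorm_lt_one [DecidableEq n] {𝕜 : Type*} [RCLike 𝕜]
    (X : Matrix n n 𝕜) (h : ‖X‖ < 1) : (1 - X).det ≠ 0 :=
  ((isUnit_iff_isUnit_det _).mp (Units.oneSub X h).isUnit).ne_zero

theorem det_one_sub_mul_ne_zero_of_l2_opNorm_le [DecidableEq m] [DecidableEq n] {𝕜 : Type*}
    [RCLike 𝕜] {ε : ℝ} (D : Matrix n m 𝕜) (Δ : Matrix m n 𝕜) (hεD : ε * ‖D‖ < 1) (hΔ : ‖Δ‖ ≤ ε) :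
    (1 - D * Δ).det ≠ 0 := by
  refine det_one_sub_ne_zero_of_l2_opNorm_lt_one _ ?_
  calc ‖D * Δ‖ ≤ ‖D‖ * ‖Δ‖ := l2_opNorm_mul D Δ
    _ ≤ ‖D‖ * ε := by gcongr
    _ < 1 := by rwa [mul_comm]

theorem det_sq_l2_opNorm_smul_one_sub_conjTranspose_mul_self [DecidableEq n] [Nonempty n]
    (G : Matrix m n ℂ) : ((‖G‖ ^ 2 : ℂ) • (1 : Matrix n n ℂ) - Gᴴ * G).det = 0 := by
  have hspec :=
    CStarAlgebra.norm_mem_spectrum_of_nonneg (posSemidef_conjTranspose_mul_self G).nonneg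
  rw [l2_opNorm_conjTranspose_mul_self, spectrum.mem_iff, isUnit_iff_isUnit_det,
    Algebra.algebraMap_eq_smul_one, RCLike.real_smul_eq_coe_smul (K := ℂ)] at hspec
  simpa [sq] using hspec

theorem exists_l2_opNorm_eq_inv_and_det_one_sub_mul_eq_zero [DecidableEq m] [DecidableEq n]
    (G : Matrix m n ℂ) (hG : G ≠ 0) :
    ∃ Δ : Matrix n m ℂ, ‖Δ‖ = ‖G‖⁻¹ ∧ (1 - Δ * G).det = 0 := by
  have : Nonempty n := not_isEmpty_iff.mp fun _ => hG (Subsingleton.elim _ _)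
  have hr : ‖G‖ ≠ 0 := norm_ne_zero_iff.mpr hG
  refine ⟨((‖G‖ : ℂ) ^ 2)⁻¹ • Gᴴ, ?_, ?_⟩
  · rw [norm_smul, l2_opNorm_conjTranspose, norm_inv, norm_pow, Complex.norm_real, norm_norm]
    field_simp
  · have hfactor : 1 - ((‖G‖ : ℂ) ^ 2)⁻¹ • Gᴴ * G =
        ((‖G‖ : ℂ) ^ 2)⁻¹ • ((‖G‖ ^ 2 : ℂ) • (1 : Matrix n n ℂ) - Gᴴ * G) := by
      rw [smul_sub, smul_smul, inv_mul_cancel₀ (by exact_mod_cast pow_ne_zero 2 hr), one_smul,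
        Matrix.smul_mul]
    rw [hfactor, det_smul, det_sq_l2_opNorm_smul_one_sub_conjTranspose_mul_self, mul_zero]

end Matrix

theorem specNorm_eq_l2_opNorm {p m : ℕ} (A : Matrix (Fin p) (Fin m) ℂ) : specNorm A = ‖A‖ := rfl

theorem det_sub_pertSys_eq_zero_iff {n m p : ℕ} {A E : Matrix (Fin n) (Fin n) ℂ}
    {B : Matrix (Fin n) (Fin m) ℂ} {C : Matrix (Fin p) (Fin n) ℂ} {D : Matrix (Fin p) (Fin m) ℂ}
    {Δ : Matrix (Fin m) (Fin p) ℂ} {z : ℂ} (hz : (z • E - A).det ≠ 0)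
    (hDΔ : (1 - D * Δ).det ≠ 0) :
    (z • E - pertSys A B C D Δ).det = 0 ↔ (1 - Δ * transferFn A B C D E z).det = 0 := by
  have hΔD : (1 - Δ * D).det ≠ 0 := det_one_sub_mul_comm D Δ ▸ hDΔ
  have key := det_sub_mul_inv_mul_mul_det_one_sub (z • E - A) B C D Δ hz.isUnit hDΔ.isUnit
  rw [pertSys, ← sub_sub, transferFn, ← mul_eq_zero_iff_right hΔD, key, mul_eq_zero_iff_left hz]

theorem svSet_eq_tf_characterization_general {n m p : ℕ} (A : Matrix (Fin n) (Fin n) ℂ)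
    (B : Matrix (Fin n) (Fin m) ℂ) (C : Matrix (Fin p) (Fin n) ℂ)
    (D : Matrix (Fin p) (Fin m) ℂ) (E : Matrix (Fin n) (Fin n) ℂ)
    (ε : ℝ) (hε : 0 < ε) (hεD : ε * specNorm D < 1) :
    svSet ε A B C D E =
      {z : ℂ | (z • E - A).det = 0} ∪
      {z : ℂ | (z • E - A).det ≠ 0 ∧ ε⁻¹ ≤ specNorm (transferFn A B C D E z)} := by
  ext z
  simp only [svSet, specNorm_eq_l2_opNorm, mem_ofPred_eq, mem_union] at hεD ⊢
  set G := transferFn A B C D E z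
  constructor
  · rintro ⟨Δ, hΔ, hdet⟩
    refine or_iff_not_imp_left.mpr fun hz => ⟨hz, ?_⟩
    have hsing := (det_sub_pertSys_eq_zero_iff hz
      (det_one_sub_mul_ne_zero_of_l2_opNorm_le D Δ hεD hΔ)).mp hdet
    rw [inv_le_iff_one_le_mul₀' hε]
    calc 1 ≤ ‖Δ * G‖ := not_lt.mp fun h => det_one_sub_ne_zero_of_l2_opNorm_lt_one _ h hsing
      _ ≤ ‖Δ‖ * ‖G‖ := l2_opNorm_mul Δ G
      _ ≤ ε * ‖G‖ := by gcongr
  · rintro (hz | ⟨hz, hG⟩)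
    · exact ⟨0, by simpa using hε.le, by simpa [pertSys] using hz⟩
    · have hG0 : G ≠ 0 := norm_pos_iff.mp ((inv_pos.mpr hε).trans_le hG)
      obtain ⟨Δ, hΔ, hsing⟩ := exists_l2_opNorm_eq_inv_and_det_one_sub_mul_eq_zero G hG0
      have hΔε : ‖Δ‖ ≤ ε := hΔ ▸ inv_le_of_inv_le₀ hε hG
      exact ⟨Δ, hΔε, (det_sub_pertSys_eq_zero_iff hz
        (det_one_sub_mul_ne_zero_of_l2_opNorm_le D Δ hεD hΔε)).mpr hsing⟩

theorem svSet_eq_tf_characterization {n m p : ℕ} (A : Matrix (Fin n) (Fin n) ℂ)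
    (B : Matrix (Fin n) (Fin m) ℂ) (C : Matrix (Fin p) (Fin n) ℂ)
    (D : Matrix (Fin p) (Fin m) ℂ) (E : Matrix (Fin n) (Fin n) ℂ)
    (hE : IsUnit E) (ε : ℝ) (hε : 0 < ε) (hεD : ε * specNorm D < 1) :
    svSet ε A B C D E =
      {z : ℂ | (z • E - A).det = 0} ∪
      {z : ℂ | (z • E - A).det ≠ 0 ∧ ε⁻¹ ≤ specNorm (transferFn A B C D E z)} :=
  svSet_eq_tf_characterization_general A B C D E ε hε hεD
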